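/- arXiv:1603.08938 — 2 statements merged into one kernel-verified Lean document; each statement's English description precedes it below -/
import Mathlib

section
/- Let k be a field and 𝒜 a finite-dimensional category. Then every finitely generated object V of Mod-𝒜 has a projective cover: there exist a finitely generated projective object P of Mod-𝒜 and an epimorphism p : P → V whose kernel is a superfluous subobject of P. -/
open CategoryTheory CategoryTheory.Limits Opposite

section
variable (k : Type) [Field k]

/-- `k`-linearity on the opposite category. -/
instance oppositeLinear (C : Type*) [Category C] [Preadditive C] [CategoryTheory.Linear k C] :
    CategoryTheory.Linear k Cᵒᵖ where
  homModule X Y := Equiv.module k (opEquiv X Y)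
  smul_comp _ _ _ _ _ _ :=
    Quiver.Hom.unop_inj (CategoryTheory.Linear.comp_smul _ _ _ _ _ _)
  comp_smul _ _ _ _ _ _ :=
    Quiver.Hom.unop_inj (CategoryTheory.Linear.smul_comp _ _ _ _ _ _)

@[simp] lemma unop_ksmul {C : Type*} [Category C] [Preadditive C]
    [CategoryTheory.Linear k C] {X Y : Cᵒᵖ} (r : k) (f : X ⟶ Y) :
    (r • f).unop = r • f.unop := rfl

/-- The property of a functor between `k`-linear categories being `k`-linear
(in particular additive). -/
def IsKLinear {C D : Type*} [Category C] [Category D] [Preadditive C] [Preadditive D]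
    [CategoryTheory.Linear k C] [CategoryTheory.Linear k D] (F : C ⥤ D) : Prop :=
  ∃ _h : F.Additive, Functor.Linear k F

/-- The category `Mod-A` of right modules over a small `k`-linear category `A`:
`k`-linear functors `Aᵒᵖ ⥤ ModuleCat k`. -/
abbrev RMod (A : Type) [SmallCategory A] [Preadditive A] [CategoryTheory.Linear k A] :=
  ObjectProperty.FullSubcategory (fun F : Aᵒᵖ ⥤ ModuleCat.{0} k => IsKLinear k F)

/-- The category `A-Mod` of left modules over a small `k`-linear category `A`:
`k`-linear functors `A ⥤ ModuleCat k`. -/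
abbrev LMod (A : Type) [SmallCategory A] [Preadditive A] [CategoryTheory.Linear k A] :=
  ObjectProperty.FullSubcategory (fun F : A ⥤ ModuleCat.{0} k => IsKLinear k F)

variable {k}

instance linYonObjLinear {C : Type*} [Category C] [Preadditive C] [CategoryTheory.Linear k C]
    (x : C) : ((linearYoneda k C).obj x).Linear k where
  map_smul f r := by
    ext (g : _ ⟶ x)
    exact CategoryTheory.Linear.smul_comp _ _ _ _ _ _

instance linCoyonObjLinear {C : Type*} [Category C] [Preadditive C] [CategoryTheory.Linear k C]
    (x : Cᵒᵖ) : ((linearCoyoneda k C).obj x).Linear k where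
  map_smul f r := by
    ext (g : x.unop ⟶ _)
    exact CategoryTheory.Linear.comp_smul _ _ _ _ _ _

variable (k)
variable (A : Type) [SmallCategory A] [Preadditive A] [CategoryTheory.Linear k A]

/-- The representable right `A`-module `Hom_A(−, x)`. -/
def reprR (x : A) : RMod k A :=
  ⟨(linearYoneda k A).obj x, inferInstance, inferInstance⟩

/-- The representable left `A`-module `Hom_A(x, −)`. -/
def reprL (x : A) : LMod k A :=
  ⟨(linearCoyoneda k A).obj (op x), inferInstance, inferInstance⟩

/-- The underlying functor of a finite direct sum of representable right modules. -/
def sumReprRFunctor {n : ℕ} (x : Fin n → A) : Aᵒᵖ ⥤ ModuleCat.{0} k where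
  obj y := ModuleCat.of k (∀ i, y.unop ⟶ x i)
  map {y z} f := ModuleCat.ofHom
    (LinearMap.pi fun i =>
      (CategoryTheory.Linear.leftComp k (x i) f.unop).comp (LinearMap.proj i))
  map_id y := by
    apply ModuleCat.hom_ext
    apply LinearMap.ext
    intro g
    funext i
    simp
  map_comp f g := by
    apply ModuleCat.hom_ext
    apply LinearMap.ext
    intro h
    funext i
    simp

instance sumReprRFunctor_additive {n : ℕ} (x : Fin n → A) :
    (sumReprRFunctor k A x).Additive where
  map_add {y z f g} := by
    apply ModuleCat.hom_ext
    apply LinearMap.ext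
    intro h
    funext i
    show (f.unop + g.unop) ≫ h i = f.unop ≫ h i + g.unop ≫ h i
    exact Preadditive.add_comp _ _ _ _ _ _

instance sumReprRFunctor_linear {n : ℕ} (x : Fin n → A) :
    (sumReprRFunctor k A x).Linear k where
  map_smul {y z} f r := by
    apply ModuleCat.hom_ext
    apply LinearMap.ext
    intro h
    funext i
    show (r • f.unop) ≫ h i = r • (f.unop ≫ h i)
    exact CategoryTheory.Linear.smul_comp _ _ _ _ _ _

/-- The finite direct sum of the representable right modules `Hom_A(−, x i)`. -/
def sumReprR {n : ℕ} (x : Fin n → A) : RMod k A :=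
  ⟨sumReprRFunctor k A x, inferInstance, inferInstance⟩

/-- A right module is finitely generated if it admits an epimorphism from a finite
direct sum of representable modules. -/
def RMod.IsFG (V : RMod k A) : Prop :=
  ∃ (n : ℕ) (x : Fin n → A) (p : sumReprR k A x ⟶ V), Epi p

variable {k A}

/-- A monomorphism `s : S ⟶ P` is a superfluous subobject of `P` if the only
subobject `t : T ⟶ P` with `S ⊔ T = P` is `P` itself; here `S ⊔ T = P` is expressed
by saying that `s` and `t` are jointly epimorphic, and `T = P` as a subobject means
that `t` is an isomorphism. -/
def IsSuperfluous {C : Type*} [Category C] {S P : C} (s : S ⟶ P) : Prop :=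
  ∀ (T : C) (t : T ⟶ P), Mono t →
    (∀ (W : C) (g h : P ⟶ W), s ≫ g = s ≫ h → t ≫ g = t ≫ h → g = h) →
    IsIso t

/-- `ι : K ⟶ P` is a kernel of `p : P ⟶ V`. -/
def IsKernelOf {C : Type*} [Category C] [Preadditive C] {K P V : C}
    (ι : K ⟶ P) (p : P ⟶ V) : Prop :=
  Mono ι ∧ ι ≫ p = 0 ∧
    ∀ (T : C) (t : T ⟶ P), t ≫ p = 0 → ∃! u : T ⟶ K, u ≫ ι = t


/-!
Write `V` as a quotient `p₀ : F ⟶ V` of a finite sum `F` of representables; by Yoneda, `F` is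
projective and `End F` is finite-dimensional. Among the idempotents `e` of `End F` for which
`e ≫ p₀` is still an epimorphism choose one for which `e ≫ End F` is minimal, split it as
`e = r ≫ i` through `P`, and put `p := i ≫ p₀`. If `g ≫ p = p`, Fitting's lemma in the
finite-dimensional algebra `End P` gives an idempotent `e'` with `e' ≫ p = p` that equals `1`
only if `g` is invertible; since `r ≫ e' ≫ i` is again such an idempotent of `F`, lying below
`e`, minimality forces `e' = 1`. So every `g` with `g ≫ p = p` is an automorphism, and as `P` is
projective this makes the kernel `K` of `p` superfluous: if `K ⊔ T = P` then `T` maps onto `V`,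
`p` lifts through `T`, and `T ↪ P` splits.
-/

variable (k) in
theorem exists_isIdempotentElem_pow_mul_eq {E : Type*} [Ring E]
    [Algebra k E] [FiniteDimensional k E] (g : E) :
    ∃ (e : E) (n : ℕ), IsIdempotentElem e ∧ g ^ n * e = g ^ n ∧ (e = 1 → IsUnit g) := by
  obtain ⟨n, hn⟩ := Filter.eventually_atTop.1
    ((LinearMap.mulRight k g).eventually_isCompl_ker_pow_range_pow.and
      (Filter.eventually_ge_atTop 1))
  obtain ⟨hcompl, hn1⟩ := hn n le_rfl
  rw [LinearMap.pow_mulRight] at hcompl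
  obtain ⟨a, ha, _, ⟨c, rfl⟩, hae⟩ :=
    Submodule.mem_sup.1 (hcompl.codisjoint.eq_top ▸ Submodule.mem_top (x := (1 : E)))
  rw [LinearMap.mulRight_apply, ← eq_sub_iff_add_eq] at hae
  subst hae
  -- `E = ker (· * gⁿ) ⊕ E gⁿ` is a decomposition into left ideals, so `c gⁿ` is a right unit
  -- on `E gⁿ`.
  have right_unit : ∀ y, y * g ^ n * (c * g ^ n) = y * g ^ n := fun y => by
    have h0 : y * g ^ n * (1 - c * g ^ n) = 0 := (Submodule.disjoint_def.1 hcompl.disjoint) _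
      (by simp_all [mul_assoc]) ⟨y - y * g ^ n * c, by simp [sub_mul, mul_sub, mul_assoc]⟩
    rwa [mul_sub, mul_one, sub_eq_zero, eq_comm] at h0
  refine ⟨c * g ^ n, n, ?_, by simpa using right_unit 1, fun h1 => ?_⟩
  · simpa [IsIdempotentElem, mul_assoc] using right_unit c
  · have : IsArtinianRing E := IsArtinianRing.of_finite k E
    exact (isUnit_pow_iff (by omega)).1 (IsUnit.of_mul_eq_one_right c h1)

section RightMinimal

variable {C : Type*} [Category C]

def IsRightMinimal {P V : C} (p : P ⟶ V) : Prop :=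
  ∀ g : P ⟶ P, g ≫ p = p → IsIso g

theorem CategoryTheory.End.pow_comp_of_comp_eq {P V : C} {g : End P} {p : P ⟶ V}
    (hg : g ≫ p = p) (n : ℕ) :
    (g ^ n : End P) ≫ p = p := by
  induction n with
  | zero => exact Category.id_comp p
  | succ n ih => rw [pow_succ, End.mul_def, Category.assoc, ih, hg]

theorem IsRightMinimal.isSuperfluous [HasZeroMorphisms C] {P V K : C} [Projective P]
    {p : P ⟶ V} [Epi p] (hp : IsRightMinimal p) {ι : K ⟶ P} (hι : ι ≫ p = 0) :
    IsSuperfluous ι := by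
  intro T t _ hjoint
  have : Epi (t ≫ p) := ⟨fun u v h => (cancel_epi p).1 <|
    hjoint _ _ _ (by simp [reassoc_of% hι]) (by simpa using h)⟩
  obtain ⟨f, hf⟩ := Projective.factors p (t ≫ p)
  have : IsIso (f ≫ t) := hp _ (by simpa using hf)
  have : IsSplitEpi t := ⟨⟨inv (f ≫ t) ≫ f, by simp⟩⟩
  exact isIso_of_mono_of_isSplitEpi t

variable [Preadditive C] [CategoryTheory.Linear k C]

variable (k) in
theorem isRightMinimal_of_forall_idempotent {P V : C} [FiniteDimensional k (P ⟶ P)] (p : P ⟶ V)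
    (h : ∀ e : P ⟶ P, e ≫ e = e → e ≫ p = p → e = 𝟙 P) : IsRightMinimal p := by
  intro g hg
  have : FiniteDimensional k (End P) := inferInstanceAs (FiniteDimensional k (P ⟶ P))
  obtain ⟨e, n, he, hgn, hunit⟩ := exists_isIdempotentElem_pow_mul_eq k (E := End P) g
  have hep : e ≫ p = p := by
    rw [← End.pow_comp_of_comp_eq hg n, ← Category.assoc, ← End.mul_def, hgn]
  exact (isUnit_iff_isIso g).1 (hunit (h e he hep))

theorem CategoryTheory.Retract.finiteDimensional_end {P F : C} (h : Retract P F)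
    [FiniteDimensional k (F ⟶ F)] : FiniteDimensional k (P ⟶ P) :=
  .of_injective ((Linear.leftComp k F h.r).comp (Linear.rightComp k P h.i)) fun g g' hgg' => by
    simpa using congr(h.i ≫ $hgg' ≫ h.r)

theorem range_leftComp_lt {X : C} {e f : X ⟶ X} (hf : f ≫ f = f) (hef : e ≫ f = f)
    (hfe : f ≫ e = f) (hne : f ≠ e) :
    LinearMap.range (Linear.leftComp k X f) < LinearMap.range (Linear.leftComp k X e) := by
  refine lt_of_le_of_ne ?_ fun heq => hne ?_
  · rintro _ ⟨h, rfl⟩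
    exact ⟨f ≫ h, by simp [← Category.assoc, hef]⟩
  · obtain ⟨h, hh⟩ : e ∈ LinearMap.range (Linear.leftComp k X f) := heq ▸ ⟨𝟙 X, by simp⟩
    simp only [Linear.leftComp_apply] at hh
    rw [← hfe, ← hh, ← Category.assoc, hf]

variable (k) in
theorem exists_retract_isRightMinimal [IsIdempotentComplete C] {F V : C}
    [FiniteDimensional k (F ⟶ F)] (p₀ : F ⟶ V) [Epi p₀] :
    ∃ (P : C) (_ : Retract P F) (p : P ⟶ V), Epi p ∧ IsRightMinimal p := by
  obtain ⟨e, ⟨he, hep⟩, hmin⟩ :=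
    (InvImage.wf (fun e => LinearMap.range (Linear.leftComp k F e)) wellFounded_lt).has_min
      {e : F ⟶ F | e ≫ e = e ∧ Epi (e ≫ p₀)} ⟨𝟙 F, by simpa⟩
  obtain ⟨P, i, r, hir, hri⟩ := IsIdempotentComplete.idempotents_split F e he
  let hP : Retract P F := ⟨i, r, hir⟩
  have : FiniteDimensional k (P ⟶ P) := hP.finiteDimensional_end
  have : Epi (r ≫ i ≫ p₀) := by rwa [← Category.assoc, hri]
  refine ⟨P, hP, i ≫ p₀, epi_of_epi r _,
    isRightMinimal_of_forall_idempotent k _ fun e' he' he'p => ?_⟩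
  have he'e : r ≫ e' ≫ i = e := by
    by_contra hne
    refine hmin (r ≫ e' ≫ i) ⟨?_, ?_⟩ (range_leftComp_lt ?_ ?_ ?_ hne)
    all_goals simp [← hri, reassoc_of% hir, reassoc_of% he', he'p, this]
  simpa [reassoc_of% hir, hir, ← hri] using congr(i ≫ $he'e ≫ r)

end RightMinimal

namespace IsKLinear

variable {C D : Type*} [Category C] [Category D] [Preadditive C] [Preadditive D]
  [CategoryTheory.Linear k C] [CategoryTheory.Linear k D] {F G : C ⥤ D}

theorem of_mono (ι : F ⟶ G) [∀ X, Mono (ι.app X)] (hG : IsKLinear k G) : IsKLinear k F := by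
  obtain ⟨_, _⟩ := hG
  refine ⟨⟨fun {X Y f g} => ?_⟩, ⟨fun {X Y} f r => ?_⟩⟩ <;>
    refine (cancel_mono (ι.app Y)).1 ?_ <;>
    simp only [Preadditive.add_comp, Linear.smul_comp, ι.naturality, Functor.map_add,
      Functor.map_smul, Preadditive.comp_add, Linear.comp_smul]

theorem of_epi (π : F ⟶ G) [∀ X, Epi (π.app X)] (hF : IsKLinear k F) : IsKLinear k G := by
  obtain ⟨_, _⟩ := hF
  refine ⟨⟨fun {X Y f g} => ?_⟩, ⟨fun {X Y} f r => ?_⟩⟩ <;>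
    refine (cancel_epi (π.app X)).1 ?_ <;>
    simp only [Preadditive.comp_add, Linear.comp_smul, ← π.naturality, Functor.map_add,
      Functor.map_smul, Preadditive.add_comp, Linear.smul_comp]

instance isStableUnderRetracts :
    ObjectProperty.IsStableUnderRetracts (IsKLinear k : ObjectProperty (C ⥤ D)) where
  of_retract h hG := .of_mono h.i hG

end IsKLinear

instance CategoryTheory.ObjectProperty.isIdempotentComplete_fullSubcategory {C : Type*} [Category C]
    [IsIdempotentComplete C] (P : ObjectProperty C) [P.IsStableUnderRetracts] :
    IsIdempotentComplete P.FullSubcategory := by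
  refine ⟨fun X p hp => ?_⟩
  obtain ⟨Y, i, e, hie, hei⟩ :=
    IsIdempotentComplete.idempotents_split X.obj p.hom congr($(hp).hom)
  exact ⟨⟨Y, P.prop_of_retract ⟨i, e, hie⟩ X.property⟩, ObjectProperty.homMk i,
    ObjectProperty.homMk e, by ext1; exact hie, by ext1; exact hei⟩

namespace RMod

variable {X Y : RMod k A}

theorem exists_isKernelOf (φ : X ⟶ Y) : ∃ (K : RMod k A) (ι : K ⟶ X), IsKernelOf ι φ := by
  let K : RMod k A := ⟨kernel φ.hom, .of_mono (kernel.ι φ.hom) X.property⟩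
  let ι : K ⟶ X := ObjectProperty.homMk (kernel.ι φ.hom)
  have : Mono ι :=
    (ObjectProperty.ι _).mono_of_mono_map (inferInstanceAs (Mono (kernel.ι φ.hom)))
  refine ⟨K, ι, this, by ext1; exact kernel.condition φ.hom, fun T t ht => ?_⟩
  refine ⟨ObjectProperty.homMk (kernel.lift φ.hom t.hom congr($(ht).hom)), ?_,
    fun u hu => by rw [← cancel_mono ι, hu]; ext1; simp [ι]⟩
  ext1; simp [ι]

theorem surjective_app_of_epi (q : X ⟶ Y) [Epi q] (y : Aᵒᵖ) :
    Function.Surjective (q.hom.app y) := by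
  let Q : RMod k A := ⟨cokernel q.hom, .of_epi (cokernel.π q.hom) Y.property⟩
  let π : Y ⟶ Q := ObjectProperty.homMk (cokernel.π q.hom)
  have hπ : π = 0 := (cancel_epi q).1 (by ext1; simp [π])
  have : Epi q.hom := Preadditive.epi_of_cokernel_zero congr($(hπ).hom)
  exact (ModuleCat.epi_iff_surjective _).1 inferInstance

end RMod

@[simp] lemma op_ksmul {C : Type*} [Category C] [Preadditive C] [CategoryTheory.Linear k C]
    {X Y : C} (r : k) (f : X ⟶ Y) : (r • f).op = r • f.op := rfl

namespace sumReprR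

variable {n : ℕ} {x : Fin n → A}

variable (x) in
def gen (i : Fin n) : (sumReprR k A x).obj.obj (op (x i)) :=
  Pi.single i (𝟙 (x i))

variable (x) in
theorem sum_map_gen {y : Aᵒᵖ} (h : ∀ i, y.unop ⟶ x i) :
    ∑ i, (sumReprR k A x).obj.map (h i).op (gen x i) = h := by
  change ∑ i, (fun j => h i ≫ (Pi.single i (𝟙 (x i)) : ∀ j, x i ⟶ x j) j) = h
  ext j
  rw [Finset.sum_apply, Finset.sum_eq_single j (fun i _ hij => by simp [hij.symm]) (by simp)]
  simp

theorem hom_ext {Y : RMod k A} {η η' : sumReprR k A x ⟶ Y}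
    (h : ∀ i, η.hom.app (op (x i)) (gen x i) = η'.hom.app (op (x i)) (gen x i)) : η = η' := by
  ext y v : 5
  rw [← sum_map_gen x v, map_sum, map_sum]
  refine Finset.sum_congr rfl fun i _ => ?_
  rw [NatTrans.naturality_apply, NatTrans.naturality_apply, h]

def desc {Y : RMod k A} (w : ∀ i, Y.obj.obj (op (x i))) : sumReprR k A x ⟶ Y :=
  ObjectProperty.homMk
  { app y := ModuleCat.ofHom
      { toFun h := ∑ i, Y.obj.map (h i).op (w i)
        map_add' h h' := by
          obtain ⟨_, _⟩ := Y.property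
          simp [← Finset.sum_add_distrib]
        map_smul' r h := by
          obtain ⟨_, _⟩ := Y.property
          simp [Finset.smul_sum] }
    naturality y z f := by
      ext h
      change ∑ i, Y.obj.map (f.unop ≫ h i).op (w i) =
        Y.obj.map f (∑ i, Y.obj.map (h i).op (w i))
      simp [map_sum] }

theorem desc_app_gen {Y : RMod k A} (w : ∀ i, Y.obj.obj (op (x i))) (i : Fin n) :
    (desc w).hom.app (op (x i)) (gen x i) = w i := by
  obtain ⟨_, _⟩ := Y.property
  change ∑ j, Y.obj.map ((Pi.single i (𝟙 (x i)) : ∀ j, x i ⟶ x j) j).op (w j) = w i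
  rw [Finset.sum_eq_single i (fun j _ hji => by simp [hji]) (by simp)]
  simp

instance projective : Projective (sumReprR k A x) := by
  refine ⟨fun {E Z} f q _ => ?_⟩
  choose w hw using fun i => RMod.surjective_app_of_epi q (op (x i)) (f.hom.app _ (gen x i))
  exact ⟨desc w, hom_ext fun i => by simp [desc_app_gen, hw]⟩

theorem finiteDimensional_hom {Y : RMod k A} [∀ i, FiniteDimensional k (Y.obj.obj (op (x i)))] :
    FiniteDimensional k (sumReprR k A x ⟶ Y) :=
  .of_injective (V₂ := ∀ i, Y.obj.obj (op (x i)))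
    { toFun η i := η.hom.app _ (gen x i)
      map_add' _ _ := rfl
      map_smul' _ _ := rfl }
    fun _ _ h => hom_ext fun i => congrFun h i

theorem finiteDimensional_end (hfd : ∀ a b : A, FiniteDimensional k (a ⟶ b)) :
    FiniteDimensional k (sumReprR k A x ⟶ sumReprR k A x) :=
  have (i : Fin n) : FiniteDimensional k ((sumReprR k A x).obj.obj (op (x i))) :=
    have := hfd (x i)
    inferInstanceAs (FiniteDimensional k (∀ j, x i ⟶ x j))
  finiteDimensional_hom

end sumReprR

theorem statement_10
    (hfd : ∀ x y : A, FiniteDimensional k (x ⟶ y))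
    (V : RMod k A) (hV : RMod.IsFG k A V) :
    ∃ (P : RMod k A) (p : P ⟶ V), RMod.IsFG k A P ∧ Projective P ∧ Epi p ∧
      ∃ (K : RMod k A) (ι : K ⟶ P), IsKernelOf ι p ∧ IsSuperfluous ι := by
  obtain ⟨n, x, p₀, hp₀⟩ := hV
  have := sumReprR.finiteDimensional_end (x := x) hfd
  obtain ⟨P, hP, p, hp, hmin⟩ := exists_retract_isRightMinimal k p₀
  have : Projective P := hP.projective
  obtain ⟨K, ι, hι⟩ := RMod.exists_isKernelOf p
  exact ⟨P, p, ⟨n, x, hP.r, inferInstance⟩, this, hp, K, ι, hι, hmin.isSuperfluous hι.2.1⟩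

end
end

section
/- Let k be a field and m ≥ n ≥ 1. In the nil Hecke algebra NH_n ⊆ End_k(k[X_1,…,X_n]), the two-sided ideal generated by the operator m_{X_1^m} (multiplication by X_1^m) coincides with the two-sided ideal generated by the operators m_{h_r(X_1,…,X_n)} for m−n+1 ≤ r ≤ m, where h_r(X_1,…,X_n) denotes the complete homogeneous symmetric polynomial of degree r in X_1,…,X_n. -/
/-!
STATEMENT 16: in the nil Hecke algebra `NH_n ⊆ End_k(k[X_1, …, X_n])`, the two-sided
ideal generated by `m_{X_1^m}` equals the two-sided ideal generated by the
multiplication operators by the complete homogeneous symmetric polynomials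
`h_r(X_1, …, X_n)` for `m − n + 1 ≤ r ≤ m` (where `m ≥ n ≥ 1`).

Here `n ≥ 1` is realized as `n = ν + 1`, so the polynomial ring has `ν + 1`
variables indexed by `Fin (ν + 1)` and there are `ν` Demazure operators, which
are quantified via their defining property.
-/

open MvPolynomial

/-- The simple transposition `σ_i` interchanging `X_i` and `X_{i+1}`. -/
noncomputable def simpleTransp {k : Type} [Field k] {ν : ℕ}
    (i : Fin ν) (f : MvPolynomial (Fin (ν + 1)) k) : MvPolynomial (Fin (ν + 1)) k :=
  rename (Equiv.swap i.castSucc i.succ) f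

/-- `D` is the family of Demazure operators: `D i` is the unique `k`-linear map with
`(X_i − X_{i+1}) · D_i f = σ_i f − f`. -/
def IsDemazureFamily {k : Type} [Field k] {ν : ℕ}
    (D : Fin ν → Module.End k (MvPolynomial (Fin (ν + 1)) k)) : Prop :=
  ∀ (i : Fin ν) (f : MvPolynomial (Fin (ν + 1)) k),
    (X i.castSucc - X i.succ) * D i f = simpleTransp i f - f

/-- The nil Hecke algebra: the subalgebra of `End_k(k[X_1, …, X_n])` generated by the
multiplication operators `m_{X_1}, …, m_{X_n}` and the Demazure operators. -/
noncomputable def nilHecke {k : Type} [Field k] {ν : ℕ}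
    (D : Fin ν → Module.End k (MvPolynomial (Fin (ν + 1)) k)) :
    Subalgebra k (Module.End k (MvPolynomial (Fin (ν + 1)) k)) :=
  Algebra.adjoin k
    (Set.range (fun j : Fin (ν + 1) =>
        Algebra.lmul k (MvPolynomial (Fin (ν + 1)) k) (X j)) ∪ Set.range D)

/-- Multiplication by any polynomial lies in the nil Hecke algebra. -/
lemma lmul_mem_nilHecke {k : Type} [Field k] {ν : ℕ}
    (D : Fin ν → Module.End k (MvPolynomial (Fin (ν + 1)) k))
    (g : MvPolynomial (Fin (ν + 1)) k) :
    Algebra.lmul k (MvPolynomial (Fin (ν + 1)) k) g ∈ nilHecke D := by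
  have h1 : g ∈ Algebra.adjoin k (Set.range (X : Fin (ν + 1) → _)) := by
    rw [MvPolynomial.adjoin_range_X]; trivial
  have h2 : (Algebra.adjoin k (Set.range (X : Fin (ν + 1) → _))).map
      (Algebra.lmul k (MvPolynomial (Fin (ν + 1)) k)) ≤ nilHecke D := by
    rw [AlgHom.map_adjoin]
    apply Algebra.adjoin_le
    rintro _ ⟨_, ⟨j, rfl⟩, rfl⟩
    exact Algebra.subset_adjoin (Or.inl ⟨j, rfl⟩)
  exact h2 ⟨g, h1, rfl⟩

/-!
Write `h_r^{(j)} = h_r(X_1, …, X_j)`. The two-sided ideal generated by any `m_f` contains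
`m_{∂_i f}`: indeed `m_{∂_i f} = ∂_i m_f − σ_i m_f σ_i ∂_i`, and `σ_i = 1 + m_{X_i − X_{i+1}} ∂_i`
lies in `NH_n`. Since `∂_j h_{r+1}^{(j)} = −h_r^{(j+1)}`, applying `∂_1, …, ∂_{n−1}` to
`X_1^r = h_r^{(1)}` with `r ≥ m` yields every `h_r^{(n)}` with `r ≥ m − n + 1`. Conversely, the
recursion `h_r^{(j)} = h_r^{(j+1)} − X_{j+1} h_{r−1}^{(j+1)}`, run downwards from `j = n`, puts
`X_1^m = h_m^{(1)}` into the ideal generated by the `h_r^{(n)}` with `m − n + 1 ≤ r ≤ m`.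
-/

section hsymmList

variable {A : Type*} [CommRing A]

def hsymmList : List A → ℕ → A
  | _, 0 => 1
  | [], _ + 1 => 0
  | a :: L, r + 1 => hsymmList L (r + 1) + a * hsymmList (a :: L) r
termination_by L r => (L.length, r)

@[simp] lemma hsymmList_zero (L : List A) : hsymmList L 0 = 1 := by
  cases L <;> rw [hsymmList]

@[simp] lemma hsymmList_nil_succ (r : ℕ) : hsymmList ([] : List A) (r + 1) = 0 := by
  rw [hsymmList]

lemma hsymmList_cons_succ (a : A) (L : List A) (r : ℕ) :
    hsymmList (a :: L) (r + 1) = hsymmList L (r + 1) + a * hsymmList (a :: L) r := by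
  rw [hsymmList]

lemma map_hsymmList {B F : Type*} [CommRing B] [FunLike F A B] [RingHomClass F A B]
    (φ : F) (L : List A) (r : ℕ) : φ (hsymmList L r) = hsymmList (L.map φ) r := by
  induction L generalizing r with
  | nil => cases r <;> simp
  | cons a L ih =>
    induction r with
    | zero => simp
    | succ r ihr => simp [hsymmList_cons_succ, ih, ihr]

lemma hsymmList_singleton (a : A) (r : ℕ) : hsymmList [a] r = a ^ r := by
  induction r with
  | zero => simp
  | succ r ih => rw [hsymmList_cons_succ, ih, hsymmList_nil_succ, pow_succ]; ring

lemma hsymmList_cons_sub_cons (a b : A) (L : List A) (r : ℕ) :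
    hsymmList (b :: L) (r + 1) - hsymmList (a :: L) (r + 1) =
      (b - a) * hsymmList (a :: b :: L) r := by
  induction r with
  | zero => simp [hsymmList_cons_succ]
  | succ r ih =>
    rw [hsymmList_cons_succ b L, hsymmList_cons_succ a L, hsymmList_cons_succ a (b :: L)]
    linear_combination a * ih

lemma hsymmList_swap (a b : A) (L : List A) (r : ℕ) :
    hsymmList (a :: b :: L) r = hsymmList (b :: a :: L) r := by
  induction r with
  | zero => simp
  | succ r ih =>
    rw [hsymmList_cons_succ a (b :: L), hsymmList_cons_succ b (a :: L)]
    linear_combination hsymmList_cons_sub_cons a b L r + b * ih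

end hsymmList

section hsymm

variable (R : Type*) [CommRing R]

lemma hsymm_option_succ (σ : Type*) [Fintype σ] [DecidableEq σ] (r : ℕ) :
    hsymm (Option σ) R (r + 1) =
      rename some (hsymm σ R (r + 1)) + X none * hsymm (Option σ) R r := by
  simp only [hsymm, ← symOptionSuccEquiv.symm.sum_comp, Fintype.sum_sum_type, map_sum,
    Finset.mul_sum, add_comm (∑ _ : Sym (Option σ) r, _)]
  congr 1 <;> refine Finset.sum_congr rfl fun s _ => ?_
  · simp [symOptionSuccEquiv, map_multiset_prod, Multiset.map_map]
  · simp [symOptionSuccEquiv, Sym.coe_cons]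

lemma hsymm_fin_succ (n r : ℕ) :
    hsymm (Fin (n + 1)) R (r + 1) =
      rename Fin.castSucc (hsymm (Fin n) R (r + 1)) +
        X (Fin.last n) * hsymm (Fin (n + 1)) R r := by
  have h := congrArg (rename finSuccEquivLast.symm) (hsymm_option_succ R (Fin n) r)
  rwa [rename_hsymm, map_add, map_mul, rename_rename, rename_hsymm, rename_X,
    finSuccEquivLast_symm_none,
    show ⇑finSuccEquivLast.symm ∘ some = Fin.castSucc from
      funext finSuccEquivLast_symm_some] at h

lemma hsymm_fin_eq_hsymmList (n r : ℕ) :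
    hsymm (Fin n) R r = hsymmList ((List.finRange n).reverse.map X) r := by
  induction n generalizing r with
  | zero =>
    cases r with
    | zero => simp
    | succ r => simp [hsymm]
  | succ n ihn =>
    induction r with
    | zero => simp
    | succ r ihr =>
      have hvars : (List.finRange (n + 1)).reverse.map X = X (Fin.last n) ::
          ((List.finRange n).reverse.map X).map (rename (R := R) Fin.castSucc) := by
        simp [List.finRange_succ_last, List.map_reverse, Function.comp_def]
      rw [hsymm_fin_succ, ihn, ihr, hvars, hsymmList_cons_succ, ← map_hsymmList]

end hsymm

section nilHecke

variable {k : Type} [Field k] {ν : ℕ}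

lemma simpleTransp_simpleTransp (i : Fin ν) (f : MvPolynomial (Fin (ν + 1)) k) :
    simpleTransp i (simpleTransp i f) = f := by
  rw [simpleTransp, simpleTransp, rename_rename, ← Equiv.coe_trans, Equiv.swap_swap,
    Equiv.coe_refl, rename_id, AlgHom.id_apply]

lemma simpleTransp_mul (i : Fin ν) (f g : MvPolynomial (Fin (ν + 1)) k) :
    simpleTransp i (f * g) = simpleTransp i f * simpleTransp i g :=
  map_mul _ f g

lemma X_castSucc_sub_X_succ_ne_zero (i : Fin ν) :
    (X i.castSucc - X i.succ : MvPolynomial (Fin (ν + 1)) k) ≠ 0 :=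
  sub_ne_zero_of_ne fun h => Fin.castSucc_lt_succ.ne (X_injective h)

lemma IsDemazureFamily.apply_mul {D : Fin ν → Module.End k (MvPolynomial (Fin (ν + 1)) k)}
    (hD : IsDemazureFamily D) (i : Fin ν) (f g : MvPolynomial (Fin (ν + 1)) k) :
    D i (f * g) = D i f * g + simpleTransp i f * D i g := by
  apply mul_left_cancel₀ (X_castSucc_sub_X_succ_ne_zero i)
  linear_combination hD i (f * g) + simpleTransp_mul i f g -
    g * hD i f - simpleTransp i f * hD i g

variable (D : Fin ν → Module.End k (MvPolynomial (Fin (ν + 1)) k))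

noncomputable def mulOp : MvPolynomial (Fin (ν + 1)) k →ₐ[k] nilHecke D :=
  (Algebra.lmul k _).codRestrict (nilHecke D) (lmul_mem_nilHecke D)

@[simp] lemma mulOp_apply (g f : MvPolynomial (Fin (ν + 1)) k) :
    (mulOp D g : Module.End k (MvPolynomial (Fin (ν + 1)) k)) f = g * f :=
  rfl

def demazureOp (i : Fin ν) : nilHecke D :=
  ⟨D i, Algebra.subset_adjoin (Or.inr ⟨i, rfl⟩)⟩

noncomputable def transpOp (i : Fin ν) : nilHecke D :=
  1 + mulOp D (X i.castSucc - X i.succ) * demazureOp D i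

variable {D}

lemma transpOp_apply (hD : IsDemazureFamily D) (i : Fin ν) (f : MvPolynomial (Fin (ν + 1)) k) :
    (transpOp D i : Module.End k (MvPolynomial (Fin (ν + 1)) k)) f = simpleTransp i f := by
  simp [transpOp, demazureOp]
  linear_combination hD i f

lemma mulOp_simpleTransp (hD : IsDemazureFamily D) (i : Fin ν)
    (f : MvPolynomial (Fin (ν + 1)) k) :
    mulOp D (simpleTransp i f) = transpOp D i * mulOp D f * transpOp D i := by
  refine Subtype.ext <| LinearMap.ext fun g => ?_
  simp [transpOp_apply hD, simpleTransp_mul, simpleTransp_simpleTransp]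

lemma mulOp_demazure (hD : IsDemazureFamily D) (i : Fin ν) (f : MvPolynomial (Fin (ν + 1)) k) :
    mulOp D (D i f) =
      demazureOp D i * mulOp D f - mulOp D (simpleTransp i f) * demazureOp D i := by
  refine Subtype.ext <| LinearMap.ext fun g => ?_
  simp [demazureOp, hD.apply_mul]

lemma mulOp_demazure_mem (hD : IsDemazureFamily D) {I : TwoSidedIdeal (nilHecke D)}
    {f : MvPolynomial (Fin (ν + 1)) k} (hf : mulOp D f ∈ I) (i : Fin ν) :
    mulOp D (D i f) ∈ I := by
  rw [mulOp_demazure hD, mulOp_simpleTransp hD]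
  exact I.sub_mem (I.mul_mem_left _ _ hf) (I.mul_mem_right _ _ (I.mul_mem_right _ _
    (I.mul_mem_left _ _ hf)))

end nilHecke

section initialVars

variable (k : Type) [Field k] (ν : ℕ)

noncomputable def initialVars (j : ℕ) : List (MvPolynomial (Fin (ν + 1)) k) :=
  ((List.finRange (ν + 1)).take j).reverse.map X

lemma initialVars_zero : initialVars k ν 0 = [] := by
  simp [initialVars]

lemma initialVars_succ {j : ℕ} (hj : j < ν + 1) :
    initialVars k ν (j + 1) = X ⟨j, hj⟩ :: initialVars k ν j := by
  simp [initialVars, List.take_add_one, List.getElem?_eq_getElem (l := List.finRange (ν + 1))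
    (by simpa using hj)]

lemma initialVars_one : initialVars k ν 1 = [X 0] :=
  initialVars_succ k ν (Nat.succ_pos ν)

lemma initialVars_top : initialVars k ν (ν + 1) = (List.finRange (ν + 1)).reverse.map X := by
  simp [initialVars]

lemma map_rename_swap_initialVars (i : Fin ν) {j : ℕ} (hj : j ≤ i) :
    (initialVars k ν j).map (rename (Equiv.swap i.castSucc i.succ)) = initialVars k ν j := by
  induction j with
  | zero => simp [initialVars_zero]
  | succ j ih =>
    rw [initialVars_succ k ν (by omega), List.map_cons, ih (by omega), rename_X,
      Equiv.swap_apply_of_ne_of_ne (Fin.ne_of_val_ne (by simp; omega))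
        (Fin.ne_of_val_ne (by simp; omega))]

end initialVars

section ideal

variable {k : Type} [Field k] {ν : ℕ} {D : Fin ν → Module.End k (MvPolynomial (Fin (ν + 1)) k)}

lemma IsDemazureFamily.apply_hsymmList_initialVars (hD : IsDemazureFamily D) (i : Fin ν)
    (r : ℕ) :
    D i (hsymmList (initialVars k ν (i + 1)) (r + 1)) =
      -hsymmList (initialVars k ν (i + 2)) r := by
  have h1 : initialVars k ν (i + 1) = X i.castSucc :: initialVars k ν i :=
    initialVars_succ k ν (by omega)
  have h2 : initialVars k ν (i + 2) = X i.succ :: X i.castSucc :: initialVars k ν i := by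
    rw [initialVars_succ k ν (by omega), h1]
    rfl
  have h3 : simpleTransp i (hsymmList (initialVars k ν (i + 1)) (r + 1)) =
      hsymmList (X i.succ :: initialVars k ν i) (r + 1) := by
    rw [simpleTransp, map_hsymmList, h1, List.map_cons, map_rename_swap_initialVars k ν i le_rfl,
      rename_X, Equiv.swap_apply_left]
  apply mul_left_cancel₀ (X_castSucc_sub_X_succ_ne_zero i)
  rw [hD i, h3, h1, h2, hsymmList_cons_sub_cons, hsymmList_swap]
  ring

lemma mulOp_hsymmList_initialVars_mem (hD : IsDemazureFamily D) {m : ℕ}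
    {I : TwoSidedIdeal (nilHecke D)} (hI : mulOp D (X 0 ^ m) ∈ I) {j : ℕ} (hj : j ≤ ν) {r : ℕ}
    (hr : m ≤ r + j) : mulOp D (hsymmList (initialVars k ν (j + 1)) r) ∈ I := by
  induction j generalizing r with
  | zero =>
    rw [initialVars_one, hsymmList_singleton, ← Nat.sub_add_cancel (by omega : m ≤ r), pow_add,
      map_mul]
    exact I.mul_mem_left _ _ hI
  | succ j ih =>
    have h := mulOp_demazure_mem hD (ih (by omega) (r := r + 1) (by omega)) ⟨j, by omega⟩
    rw [hD.apply_hsymmList_initialVars, map_neg] at h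
    rw [← neg_neg (mulOp D _)]
    exact I.neg_mem h

lemma mulOp_X_zero_pow_mem {m : ℕ} (hm : ν + 1 ≤ m) {J : TwoSidedIdeal (nilHecke D)}
    (hJ : ∀ r, m ≤ r + ν → r ≤ m → mulOp D (hsymmList (initialVars k ν (ν + 1)) r) ∈ J) :
    mulOp D (X 0 ^ m) ∈ J := by
  suffices h : ∀ j ≤ ν, ∀ r ≤ m, m ≤ r + j →
      mulOp D (hsymmList (initialVars k ν (j + 1)) r) ∈ J by
    simpa [initialVars_one, hsymmList_singleton] using h 0 ν.zero_le m le_rfl (by omega)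
  intro j hj
  induction hj using Nat.decreasingInduction with
  | self => exact fun r h₁ h₂ => hJ r h₂ h₁
  | of_succ j hj ih =>
    rintro (_ | r) h₁ h₂
    · omega
    have hrec : hsymmList (initialVars k ν (j + 1)) (r + 1) =
        hsymmList (initialVars k ν (j + 2)) (r + 1) -
          X ⟨j + 1, by omega⟩ * hsymmList (initialVars k ν (j + 2)) r := by
      rw [initialVars_succ k ν (j := j + 1) (by omega), hsymmList_cons_succ]
      ring
    rw [hrec, map_sub, map_mul]
    exact J.sub_mem (ih _ h₁ (by omega)) (J.mul_mem_left _ _ (ih _ (by omega) (by omega)))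

end ideal

theorem statement_16 {k : Type} [Field k] {ν : ℕ} {m : ℕ} (hm : ν + 1 ≤ m)
    (D : Fin ν → Module.End k (MvPolynomial (Fin (ν + 1)) k))
    (hD : IsDemazureFamily D) :
    TwoSidedIdeal.span
        {(⟨Algebra.lmul k (MvPolynomial (Fin (ν + 1)) k) (X 0 ^ m),
            by simpa using lmul_mem_nilHecke D (X 0 ^ m)⟩ : nilHecke D)} =
      TwoSidedIdeal.span
        ((fun r : ℕ =>
            (⟨Algebra.lmul k (MvPolynomial (Fin (ν + 1)) k)
                (MvPolynomial.hsymm (Fin (ν + 1)) k r),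
              lmul_mem_nilHecke D _⟩ : nilHecke D)) ''
          (Set.Icc (m - (ν + 1) + 1) m)) := by
  have hgen (r : ℕ) : (⟨Algebra.lmul k _ (hsymm (Fin (ν + 1)) k r), lmul_mem_nilHecke D _⟩ :
      nilHecke D) = mulOp D (hsymmList (initialVars k ν (ν + 1)) r) := by
    rw [initialVars_top, ← hsymm_fin_eq_hsymmList]
    rfl
  apply le_antisymm
  · rw [TwoSidedIdeal.span_le, Set.singleton_subset_iff]
    exact mulOp_X_zero_pow_mem hm fun r h₁ h₂ =>
      hgen r ▸ TwoSidedIdeal.subset_span ⟨r, ⟨by omega, h₂⟩, rfl⟩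
  · rw [TwoSidedIdeal.span_le]
    rintro _ ⟨r, hr, rfl⟩
    simp only [SetLike.mem_coe, hgen]
    refine mulOp_hsymmList_initialVars_mem hD
      (TwoSidedIdeal.subset_span (Set.mem_singleton _)) le_rfl ?_
    simp only [Set.mem_Icc] at hr
    omega
end
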